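/- arXiv:2006.15354 — 5 statements merged into one kernel-verified Lean document; each statement's English description precedes it below -/
import Mathlib

section
/- Let Σ⁻¹ be a symmetric positive-definite n×n real matrix, and let R_1, R_2 be two n×n permutation matrices with R = R_2 R_1^T. Then the set Z = { z ∈ R^n : z^T R_1^T Σ⁻¹ R_1 z = z^T R_2^T Σ⁻¹ R_2 z } equals all of R^n if Σ⁻¹ and R commute, and has Lebesgue measure zero if Σ⁻¹ and R do not commute. -/
open Matrix MeasureTheory

/-!
With `R = P₂P₁ᵀ`, the matrix `Σ⁻¹` commutes with `R` exactly when `P₁ᵀΣ⁻¹P₁ = P₂ᵀΣ⁻¹P₂`. Otherwise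
`Z` is the zero set of the quadratic form of the nonzero symmetric matrix `P₁ᵀΣ⁻¹P₁ - P₂ᵀΣ⁻¹P₂`,
which by polarization is a nonzero polynomial. The zero set of a nonzero real polynomial in `n + 1`
variables is null by Fubini: outside the (inductively null) zero set of its leading coefficient in
the first variable, every slice is the finite root set of a nonzero one-variable polynomial.
-/

theorem Units.inv_mul_mul_eq_inv_mul_mul_iff {M : Type*} [Monoid M] (u v : Mˣ) (s : M) :
    ↑u⁻¹ * s * u = ↑v⁻¹ * s * v ↔ s * (v * ↑u⁻¹) = v * ↑u⁻¹ * s := by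
  rw [← (Units.mulRight u⁻¹).injective.eq_iff, ← (Units.mulLeft v).injective.eq_iff]
  simp [mul_assoc, eq_comm]

def Equiv.Perm.permMatrixUnit {n R : Type*} [Fintype n] [DecidableEq n] [Semiring R]
    (σ : Equiv.Perm n) : (Matrix n n R)ˣ where
  val := σ.permMatrix R
  inv := (σ.permMatrix R)ᵀ
  val_inv := by rw [transpose_permMatrix, ← permMatrix_mul, inv_mul_cancel, permMatrix_one]
  inv_val := by rw [transpose_permMatrix, ← permMatrix_mul, mul_inv_cancel, permMatrix_one]

theorem Matrix.IsSymm.transpose_mul_mul {m n R : Type*} [Fintype m] [CommSemiring R]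
    {A : Matrix m m R} (hA : A.IsSymm) (B : Matrix m n R) : (Bᵀ * A * B).IsSymm := by
  rw [IsSymm, transpose_mul, transpose_mul, transpose_transpose, hA.eq, Matrix.mul_assoc]

theorem Matrix.IsSymm.eq_zero_of_dotProduct_mulVec_self {n R : Type*} [Fintype n] [DecidableEq n]
    [CommRing R] [NoZeroDivisors R] [NeZero (2 : R)] {M : Matrix n n R} (hM : M.IsSymm)
    (h : ∀ z, z ⬝ᵥ M *ᵥ z = 0) : M = 0 := by
  have hpolar : ∀ z w, 2 * (z ⬝ᵥ M *ᵥ w) = 0 := fun z w => by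
    have hswap : w ⬝ᵥ M *ᵥ z = z ⬝ᵥ M *ᵥ w := by
      rw [dotProduct_mulVec, dotProduct_comm, ← mulVec_transpose, hM.eq]
    have := h (z + w)
    rw [add_dotProduct, mulVec_add, dotProduct_add, dotProduct_add, h z, h w, hswap] at this
    linear_combination this
  ext i j
  have := hpolar (Pi.single i 1) (Pi.single j 1)
  simpa [two_ne_zero] using this

theorem MeasureTheory.volume_eq_zero_of_ae_volume_setOf_cons_mem {α : Type*} [MeasureSpace α]
    [SigmaFinite (volume : Measure α)] {n : ℕ} {s : Set (Fin (n + 1) → α)} (hs : MeasurableSet s)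
    (h : ∀ᵐ y ∂(volume : Measure (Fin n → α)), volume {t : α | Fin.cons t y ∈ s} = 0) :
    volume s = 0 := by
  have he := (volume_preserving_piFinSuccAbove (fun _ : Fin (n + 1) => α) 0).symm
  rw [← he.measure_preimage hs.nullMeasurableSet, Measure.volume_eq_prod,
    Measure.prod_apply_symm (he.measurable hs)]
  refine (lintegral_congr_ae ?_).trans lintegral_zero
  filter_upwards [h] with y hy
  simpa [Fin.consEquiv, Set.preimage] using hy

theorem MvPolynomial.volume_setOf_eval_eq_zero {n : ℕ} {p : MvPolynomial (Fin n) ℝ} (hp : p ≠ 0) :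
    volume {x : Fin n → ℝ | eval x p = 0} = 0 := by
  induction n with
  | zero =>
    rw [p.eq_C_of_isEmpty, Ne, C_eq_zero] at *
    simp [hp]
  | succ n ih =>
    set q := finSuccEquiv ℝ n p
    have hq : q ≠ 0 := (EmbeddingLike.map_ne_zero_iff).2 hp
    have hlead := ih (Polynomial.leadingCoeff_ne_zero.2 hq)
    refine volume_eq_zero_of_ae_volume_setOf_cons_mem
      (measurableSet_eq_fun (continuous_eval p).measurable measurable_const) ?_
    filter_upwards [measure_eq_zero_iff_ae_notMem.1 hlead] with y hy
    have hqy : q.map (eval y) ≠ 0 := fun h0 => hy <| by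
      rw [Polynomial.leadingCoeff, ← Polynomial.coeff_map, h0, Polynomial.coeff_zero]
    convert (Polynomial.finite_setOfPred_isRoot hqy).measure_zero volume using 2
    ext t
    simp [q, eval_eq_eval_mv_eval']

open MvPolynomial in
theorem Matrix.volume_setOf_dotProduct_mulVec_self_eq_zero {n : ℕ}
    {M : Matrix (Fin n) (Fin n) ℝ} (hM : M.IsSymm) (hM₀ : M ≠ 0) :
    volume {z : Fin n → ℝ | z ⬝ᵥ M *ᵥ z = 0} = 0 := by
  set p : MvPolynomial (Fin n) ℝ := ∑ i, ∑ j, C (M i j) * X i * X j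
  have hp : ∀ z, eval z p = z ⬝ᵥ M *ᵥ z := fun z => by
    simp only [p, map_sum, map_mul, eval_C, eval_X, dotProduct, mulVec, Finset.mul_sum]
    exact Finset.sum_congr rfl fun i _ => Finset.sum_congr rfl fun j _ => by ring
  have hp₀ : p ≠ 0 := fun h => hM₀ <| hM.eq_zero_of_dotProduct_mulVec_self fun z => by
    rw [← hp, h, map_zero]
  simpa only [hp] using MvPolynomial.volume_setOf_eval_eq_zero hp₀

/-- For permutation matrices `R₁, R₂` and a symmetric positive-definite matrix `Σ⁻¹`,
the set where the two permuted quadratic forms agree is all of `ℝⁿ` when `Σ⁻¹`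
commutes with `R = R₂R₁ᵀ`, and has Lebesgue measure zero otherwise. -/
theorem quadratic_equality_set_measure (n : ℕ) (S : Matrix (Fin n) (Fin n) ℝ)
    (hS : S.PosDef) (σ₁ σ₂ : Equiv.Perm (Fin n)) :
    (S * (σ₂.permMatrix ℝ * (σ₁.permMatrix ℝ)ᵀ)
        = (σ₂.permMatrix ℝ * (σ₁.permMatrix ℝ)ᵀ) * S →
      {z : Fin n → ℝ | z ⬝ᵥ ((σ₁.permMatrix ℝ)ᵀ * S * σ₁.permMatrix ℝ) *ᵥ z
          = z ⬝ᵥ ((σ₂.permMatrix ℝ)ᵀ * S * σ₂.permMatrix ℝ) *ᵥ z} = Set.univ)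
    ∧ (¬ (S * (σ₂.permMatrix ℝ * (σ₁.permMatrix ℝ)ᵀ)
        = (σ₂.permMatrix ℝ * (σ₁.permMatrix ℝ)ᵀ) * S) →
      volume {z : Fin n → ℝ | z ⬝ᵥ ((σ₁.permMatrix ℝ)ᵀ * S * σ₁.permMatrix ℝ) *ᵥ z
          = z ⬝ᵥ ((σ₂.permMatrix ℝ)ᵀ * S * σ₂.permMatrix ℝ) *ᵥ z} = 0) := by
  set A := (σ₁.permMatrix ℝ)ᵀ * S * σ₁.permMatrix ℝ
  set B := (σ₂.permMatrix ℝ)ᵀ * S * σ₂.permMatrix ℝ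
  have hAB : S * (σ₂.permMatrix ℝ * (σ₁.permMatrix ℝ)ᵀ)
      = (σ₂.permMatrix ℝ * (σ₁.permMatrix ℝ)ᵀ) * S ↔ A = B :=
    (Units.inv_mul_mul_eq_inv_mul_mul_iff σ₁.permMatrixUnit σ₂.permMatrixUnit S).symm
  refine ⟨fun h => ?_, fun h => ?_⟩
  · rw [hAB.1 h]
    exact Set.eq_univ_of_forall fun z => rfl
  have hSymm : S.IsSymm := isHermitian_iff_isSymm.1 hS.1
  have hZ : {z : Fin n → ℝ | z ⬝ᵥ A *ᵥ z = z ⬝ᵥ B *ᵥ z} = {z | z ⬝ᵥ (A - B) *ᵥ z = 0} := by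
    simp only [sub_mulVec, dotProduct_sub, sub_eq_zero]
  rw [hZ]
  exact volume_setOf_dotProduct_mulVec_self_eq_zero
    ((hSymm.transpose_mul_mul _).sub (hSymm.transpose_mul_mul _)) (sub_ne_zero.2 (mt hAB.2 h))
end

section
/- Let C be a circulant n×n matrix (over C) all of whose eigenvalues have multiplicity 1. If a permutation matrix R commutes with C, then R is a cyclic shift matrix. -/
open Function Matrix Complex ZMod

/-!
The characters `x ↦ ψ (m * x)` of `ZMod n` (`ψ = stdAddChar`) are eigenvectors of `circulant c`
with eigenvalues `𝓕 c m`. When these are distinct every eigenspace is spanned by one character: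
a left and a right eigenvector for different eigenvalues are orthogonal, so all Fourier
coefficients of an eigenvector but one vanish. A permutation matrix commuting with `circulant c`
maps `ψ` into its eigenspace, hence `ψ ∘ σ = a • ψ`; evaluating at `0` and using the injectivity
of `ψ` shows that `σ` is a translation.
-/

namespace Matrix

variable {ι K : Type*} [Fintype ι] [Field K]

theorem dotProduct_eq_zero_of_vecMul_eq_smul_of_mulVec_eq_smul {A : Matrix ι ι K}
    {v w : ι → K} {a b : K} (hv : v ᵥ* A = a • v) (hw : A *ᵥ w = b • w) (hab : a ≠ b) :
    v ⬝ᵥ w = 0 := by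
  have h : a * (v ⬝ᵥ w) = b * (v ⬝ᵥ w) := by
    rw [← smul_eq_mul, ← smul_dotProduct, ← hv, ← dotProduct_mulVec, hw, dotProduct_smul,
      smul_eq_mul]
  by_contra hvw
  exact hab (mul_right_cancel₀ hvw h)

theorem mulVec_mulVec_eq_smul_of_commute {A B : Matrix ι ι K} {v : ι → K} {a : K}
    (hAB : Commute A B) (hv : A *ᵥ v = a • v) : A *ᵥ (B *ᵥ v) = a • (B *ᵥ v) := by
  rw [mulVec_mulVec, hAB.eq, ← mulVec_mulVec, hv, mulVec_smul]

theorem permMatrix_addRight {G R : Type*} [AddCommGroup G] [DecidableEq G] [Zero R] [One R]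
    (k : G) : (Equiv.addRight k).permMatrix R = circulant (Pi.single (-k) 1) := by
  ext i j
  simp only [PEquiv.toMatrix_apply, Equiv.toPEquiv_apply, Option.mem_def, Option.some.injEq,
    Equiv.coe_addRight, circulant_apply, Pi.single_apply, sub_eq_iff_eq_add, neg_add_eq_sub,
    eq_sub_iff_add_eq]

end Matrix

theorem AddChar.eq_addRight_of_comp_eq_smul {G R : Type*} [AddGroup G] [CommMonoid R]
    {ψ : AddChar G R} (hψ : Injective ψ) {σ : Equiv.Perm G} {a : R} (h : ψ ∘ σ = a • ψ) :
    σ = Equiv.addRight (σ 0) := by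
  have ha : a = ψ (σ 0) := by simpa using (congrFun h 0).symm
  ext x
  refine hψ ?_
  rw [Equiv.coe_addRight, AddChar.map_add_eq_mul, ← ha, mul_comm]
  exact congrFun h x

namespace ZMod

variable {n : ℕ} [NeZero n]

theorem dft_neg_eq_sum_mul_exp (c : ZMod n → ℂ) (ℓ : ZMod n) :
    𝓕 c (-ℓ) = ∑ j : ZMod n, c j * exp (2 * Real.pi * I * ℓ.val * j.val / n) := by
  refine Finset.sum_congr rfl fun j _ => ?_
  rw [smul_eq_mul, mul_comm]
  congr 1
  have hval : -(j * -ℓ) = ((ℓ.val * j.val : ℕ) : ZMod n) := by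
    push_cast [natCast_zmod_val]
    ring
  rw [hval, stdAddChar_apply, toCircle_natCast]
  push_cast
  ring_nf

theorem circulant_mulVec_stdAddChar (c : ZMod n → ℂ) (m : ZMod n) :
    circulant c *ᵥ (fun x => stdAddChar (m * x)) = 𝓕 c m • fun x => stdAddChar (m * x) := by
  ext x
  rw [mulVec, dotProduct, Pi.smul_apply, dft_apply, smul_eq_mul, Finset.sum_mul]
  refine Fintype.sum_equiv (Equiv.subLeft x) _ _ fun y => ?_
  simp only [circulant_apply, Equiv.subLeft_apply, smul_eq_mul]
  rw [mul_right_comm, mul_comm, ← AddChar.map_add_eq_mul]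
  ring_nf

theorem stdAddChar_vecMul_circulant (c : ZMod n → ℂ) (ℓ : ZMod n) :
    (fun x => stdAddChar (ℓ * x)) ᵥ* circulant c = 𝓕 c (-ℓ) • fun x => stdAddChar (ℓ * x) := by
  rw [← mulVec_transpose, transpose_circulant, circulant_mulVec_stdAddChar, dft_comp_neg]

theorem eq_smul_stdAddChar_of_circulant_mulVec_eq_smul {c f : ZMod n → ℂ} (hc : Injective (𝓕 c))
    {m : ZMod n} (hf : circulant c *ᵥ f = 𝓕 c m • f) :
    ∃ a : ℂ, f = a • fun x => stdAddChar (m * x) := by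
  have hdft : ∀ k, k ≠ m → 𝓕 f k = 0 := fun k hk => by
    rw [← dotProduct_eq_zero_of_vecMul_eq_smul_of_mulVec_eq_smul
      (stdAddChar_vecMul_circulant c (-k)) hf (by rwa [neg_neg, hc.ne_iff])]
    refine Finset.sum_congr rfl fun j _ => ?_
    rw [smul_eq_mul, mul_comm j k, ← neg_mul]
  refine ⟨(n : ℂ)⁻¹ * 𝓕 f m, funext fun x => ?_⟩
  calc f x = 𝓕⁻ (𝓕 f) x := by rw [LinearEquiv.symm_apply_apply]
    _ = _ := by
      rw [invDFT_apply, Finset.sum_eq_single m (fun k _ hk => by rw [hdft k hk, smul_zero])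
        (fun h => absurd (Finset.mem_univ m) h)]
      simp only [smul_eq_mul, Pi.smul_apply]
      ring

end ZMod

/-- A permutation matrix commuting with a circulant matrix whose eigenvalues
(the DFT of the defining vector) are pairwise distinct must be a cyclic shift
matrix. -/
theorem perm_commuting_with_simple_circulant_is_cyclic (n : ℕ) [NeZero n]
    (c : ZMod n → ℂ)
    (hdist : Function.Injective fun ℓ : ZMod n =>
      ∑ j : ZMod n, c j * Complex.exp (2 * Real.pi * Complex.I * ℓ.val * j.val / n))
    (σ : Equiv.Perm (ZMod n))
    (hcomm : σ.permMatrix ℂ * Matrix.circulant c = Matrix.circulant c * σ.permMatrix ℂ) :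
    ∃ k : ZMod n, σ.permMatrix ℂ = Matrix.circulant (Pi.single k (1 : ℂ)) := by
  have hc : Injective (𝓕 c) := by
    simpa only [comp_def, ← dft_neg_eq_sum_mul_exp, neg_neg] using hdist.comp neg_injective
  obtain ⟨a, ha⟩ := eq_smul_stdAddChar_of_circulant_mulVec_eq_smul hc
    (mulVec_mulVec_eq_smul_of_commute hcomm.symm (circulant_mulVec_stdAddChar c 1))
  simp only [permMatrix_mulVec, one_mul] at ha
  rw [AddChar.eq_addRight_of_comp_eq_smul injective_stdAddChar ha, permMatrix_addRight]
  exact ⟨_, rfl⟩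
end

section
/- Let R be an n×n permutation matrix and w ∈ C^n a vector with all entries nonzero whose entries are the powers (w)[j] = ω^{ℓ j} of a primitive n-th root of unity for some fixed ℓ coprime to n. If R w = α w for some scalar α, then R is a cyclic shift matrix. -/
open Matrix Complex

/-! The entries of `w` are the values of the additive character `j ↦ η ^ j` of `ZMod n`, with
`η = ω ^ ℓ` again a primitive `n`-th root of unity, so this character is injective.
The eigen-equation reads `w (σ j) = α * w j`; at `j = 0` it gives `α = w (σ 0)`, hence
`w (σ j) = w (σ 0 + j)`, and injectivity makes `σ` the translation by `σ 0`. -/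

theorem Complex.isPrimitiveRoot_exp_neg (n : ℕ) (hn : n ≠ 0) :
    IsPrimitiveRoot (exp (-2 * Real.pi * I / n)) n := by
  convert isPrimitiveRoot_exp_of_isCoprime (-1) n hn (isCoprime_one_left.neg_left) using 2
  push_cast
  ring

theorem IsPrimitiveRoot.zmodChar_injective {C : Type*} [CommMonoid C] {n : ℕ} [NeZero n] {ζ : C}
    (hζ : IsPrimitiveRoot ζ n) : Function.Injective (AddChar.zmodChar n hζ.pow_eq_one) :=
  fun a b hab ↦ ZMod.val_injective n <| hζ.pow_inj a.val_lt b.val_lt hab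

theorem AddChar.apply_eq_apply_zero_add_of_map_apply_eq_mul {G M : Type*} [AddMonoid G] [Monoid M]
    {ψ : AddChar G M} (hψ : Function.Injective ψ) {σ : G → G} {α : M}
    (hσ : ∀ i, ψ (σ i) = α * ψ i) (i : G) : σ i = σ 0 + i := by
  have hα : α = ψ (σ 0) := by simpa using (hσ 0).symm
  exact hψ <| by rw [hσ, hα, map_add_eq_mul]

theorem Equiv.Perm.permMatrix_eq_circulant_of_apply_eq_add {G R : Type*} [AddGroup G]
    [DecidableEq G] [Zero R] [One R] {σ : Equiv.Perm G} {k : G} (hσ : ∀ i, σ i = k + i) :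
    σ.permMatrix R = circulant (Pi.single (-k) 1) := by
  ext i j
  have hij : σ i = j ↔ i - j = -k := by
    rw [hσ, sub_eq_iff_eq_add, eq_neg_add_iff_add_eq]
  by_cases h : σ i = j
  · simp [PEquiv.toMatrix_apply, h, hij.mp h]
  · simp [PEquiv.toMatrix_apply, h, mt hij.mpr h]

/-- If a permutation matrix has the vector `w[j] = ω^{ℓj}` (with `ℓ` coprime to `n`,
`ω = e^{-2πi/n}`) as an eigenvector, then it is a cyclic shift matrix. -/
theorem perm_with_character_eigenvector_is_cyclic (n : ℕ) [NeZero n]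
    (ℓ : ZMod n) (hℓ : Nat.Coprime ℓ.val n)
    (σ : Equiv.Perm (ZMod n)) (α : ℂ) (w : ZMod n → ℂ)
    (hw : ∀ j : ZMod n, w j = Complex.exp (-2 * Real.pi * Complex.I / n) ^ (ℓ.val * j.val))
    (h : (σ.permMatrix ℂ) *ᵥ w = α • w) :
    ∃ k : ZMod n, σ.permMatrix ℂ = Matrix.circulant (Pi.single k (1 : ℂ)) := by
  have hη : IsPrimitiveRoot (exp (-2 * Real.pi * I / n) ^ ℓ.val) n :=
    (isPrimitiveRoot_exp_neg n (NeZero.ne n)).pow_of_coprime _ hℓ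
  set ψ := AddChar.zmodChar n hη.pow_eq_one
  have hwψ : ∀ j, w j = ψ j := fun j ↦ by rw [hw, AddChar.zmodChar_apply, pow_mul]
  have heigen : ∀ i, ψ (σ i) = α * ψ i := fun i ↦ by
    simpa [permMatrix_mulVec, hwψ] using congrFun h i
  exact ⟨-σ 0, Equiv.Perm.permMatrix_eq_circulant_of_apply_eq_add
    (AddChar.apply_eq_apply_zero_add_of_map_apply_eq_mul hη.zmodChar_injective heigen)⟩
end

section
/- Let Σ⁻¹ be a symmetric positive-definite n×n matrix and G a finite group of permutation matrices. Suppose that for all R_1 ≠ R_2 in G, Σ⁻¹ does not commute with R_2 R_1^T. Then for almost every x ∈ R^n (with respect to Lebesgue measure), the values ‖R x‖²_{Σ⁻¹} for R ∈ G are pairwise distinct; in particular the minimizer of y ↦ y^T Σ⁻¹ y over the orbit {R x : R ∈ G} is unique. -/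
open Matrix MeasureTheory

/-!
For `σ₁ ≠ σ₂` the difference `‖P_{σ₁} x‖²_S - ‖P_{σ₂} x‖²_S` is the quadratic form of the
symmetric matrix `A = P_{σ₁}ᵀ S P_{σ₁} - P_{σ₂}ᵀ S P_{σ₂}`, and `A = 0` would make `S` commute
with `P_{σ₂} P_{σ₁}ᵀ`. A nonzero quadratic form `Q` has a null zero set: pick `v` with
`Q v ≠ 0`; on every line `x + ℝ v` the form is a genuine quadratic polynomial in the
parameter, so meets the zero set in finitely many points, and Fubini plus translation
invariance turns this into `μ {Q = 0} = 0`. Off the finitely many resulting null sets the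
values on the orbit are pairwise distinct, so the minimum over the finite orbit is attained
exactly once.
-/

section NullSets

variable {E : Type*} [NormedAddCommGroup E] [NormedSpace ℝ E] [MeasurableSpace E] [BorelSpace E]
  (μ : Measure E) [SFinite μ] [μ.IsAddRightInvariant]

theorem measure_eq_zero_of_forall_volume_line_eq_zero {Z : Set E} (hZ : MeasurableSet Z) (v : E)
    (hline : ∀ x, volume {t : ℝ | x + t • v ∈ Z} = 0) : μ Z = 0 := by
  set W : Set (ℝ × E) := {p | p.2 + p.1 • v ∈ Z}
  have hW : MeasurableSet W :=
    hZ.preimage (by fun_prop : Continuous fun p : ℝ × E => p.2 + p.1 • v).measurable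
  have htranslate : ∀ t : ℝ, μ (Prod.mk t ⁻¹' W) = μ Z :=
    fun t => measure_preimage_add_right μ (t • v) Z
  have h : μ Z * ⊤ = 0 :=
    calc μ Z * ⊤ = ∫⁻ t : ℝ, μ (Prod.mk t ⁻¹' W) := by simp [htranslate]
      _ = (volume.prod μ) W := (Measure.prod_apply hW).symm
      _ = ∫⁻ x, volume ((·, x) ⁻¹' W) ∂μ := Measure.prod_apply_symm hW
      _ = 0 := by simp [W, hline]
  simpa using h

theorem QuadraticMap.measure_setOf_eq_zero (Q : QuadraticMap ℝ E ℝ) (hQ : Measurable Q)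
    (hQ0 : Q ≠ 0) : μ {x | Q x = 0} = 0 := by
  obtain ⟨v, hv⟩ : ∃ v, Q v ≠ 0 := by
    by_contra! h
    exact hQ0 (QuadraticMap.ext h)
  refine measure_eq_zero_of_forall_volume_line_eq_zero μ (hQ (measurableSet_singleton 0)) v
    fun x => ?_
  open Polynomial in
  have hp : C (Q v) * X ^ 2 + C (polar Q x v) * X + C (Q x) ≠ 0 :=
    ne_zero_of_natDegree_gt (n := 1) (by rw [natDegree_quadratic hv]; norm_num)
  refine ((Polynomial.finite_setOfPred_isRoot hp).subset fun t ht => ?_).measure_zero _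
  change Q (x + t • v) = 0 at ht
  rw [QuadraticMap.map_add Q, QuadraticMap.map_smul, QuadraticMap.polar_smul_right] at ht
  simp only [Set.mem_ofPred_eq, Polynomial.IsRoot, Polynomial.eval_add, Polynomial.eval_mul,
    Polynomial.eval_pow, Polynomial.eval_C, Polynomial.eval_X]
  linear_combination ht

end NullSets

section Matrices

variable {ι R : Type*} [Fintype ι] [DecidableEq ι]

theorem Matrix.toQuadraticForm'_apply [CommRing R] (A : Matrix ι ι R) (x : ι → R) :
    A.toQuadraticForm' x = x ⬝ᵥ A *ᵥ x := by
  simp [toQuadraticForm', toLinearMap₂'_apply']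

theorem Matrix.continuous_toQuadraticForm' (A : Matrix ι ι ℝ) : Continuous A.toQuadraticForm' := by
  simp only [funext A.toQuadraticForm'_apply]
  exact continuous_id.dotProduct (continuous_const.matrix_mulVec continuous_id)

theorem Matrix.IsSymm.toQuadraticForm'_eq_zero_iff [CommRing R] [IsDomain R] [CharZero R]
    {A : Matrix ι ι R} (hA : A.IsSymm) : A.toQuadraticForm' = 0 ↔ A = 0 := by
  refine ⟨fun h => ?_, fun h => by ext x; simp [h, toQuadraticForm'_apply]⟩
  have hquad (v : ι → R) : v ⬝ᵥ A *ᵥ v = 0 := by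
    simpa [toQuadraticForm'_apply] using DFunLike.congr_fun h v
  ext i j
  have hii := hquad (Pi.single i 1)
  have hjj := hquad (Pi.single j 1)
  have hij := hquad (Pi.single i 1 + Pi.single j 1)
  simp only [mulVec_add, dotProduct_add, add_dotProduct, single_one_dotProduct, mulVec,
    dotProduct_single_one, hA.apply i j] at hii hjj hij
  have htwice : (2 : R) * A i j = 0 := by linear_combination hij - hii - hjj
  simpa using htwice

omit [DecidableEq ι] in
theorem Matrix.dotProduct_mulVec_mulVec_self [CommSemiring R] (M S : Matrix ι ι R) (x : ι → R) :
    (M *ᵥ x) ⬝ᵥ S *ᵥ (M *ᵥ x) = x ⬝ᵥ (Mᵀ * S * M) *ᵥ x := by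
  rw [← mulVec_mulVec, ← mulVec_mulVec, dotProduct_mulVec x, vecMul_transpose]

theorem Matrix.commute_mul_transpose_of_transpose_mul_mul_eq [CommSemiring R]
    {S P₁ P₂ : Matrix ι ι R} (h₁ : P₁ * P₁ᵀ = 1) (h₂ : P₂ * P₂ᵀ = 1)
    (h : P₁ᵀ * S * P₁ = P₂ᵀ * S * P₂) : Commute S (P₂ * P₁ᵀ) :=
  calc S * (P₂ * P₁ᵀ) = P₂ * P₂ᵀ * S * P₂ * P₁ᵀ := by rw [h₂, Matrix.one_mul, Matrix.mul_assoc]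
    _ = P₂ * (P₂ᵀ * S * P₂) * P₁ᵀ := by simp only [Matrix.mul_assoc]
    _ = P₂ * P₁ᵀ * S * (P₁ * P₁ᵀ) := by rw [← h]; simp only [Matrix.mul_assoc]
    _ = P₂ * P₁ᵀ * S := by rw [h₁, Matrix.mul_one]

theorem Equiv.Perm.permMatrix_mul_transpose [NonAssocSemiring R] (σ : Equiv.Perm ι) :
    σ.permMatrix R * (σ.permMatrix R)ᵀ = 1 := by
  rw [transpose_permMatrix, ← permMatrix_mul, inv_mul_cancel, permMatrix_one]

theorem Matrix.ae_dotProduct_mulVec_ne_of_not_commute {S P₁ P₂ : Matrix ι ι ℝ} (hS : S.IsSymm)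
    (h₁ : P₁ * P₁ᵀ = 1) (h₂ : P₂ * P₂ᵀ = 1) (hnc : ¬Commute S (P₂ * P₁ᵀ)) :
    ∀ᵐ x ∂volume, (P₁ *ᵥ x) ⬝ᵥ S *ᵥ (P₁ *ᵥ x) ≠ (P₂ *ᵥ x) ⬝ᵥ S *ᵥ (P₂ *ᵥ x) := by
  set A := P₁ᵀ * S * P₁ - P₂ᵀ * S * P₂
  have hA : A.IsSymm := by
    simp only [A, IsSymm, transpose_sub, transpose_mul, transpose_transpose, hS.eq,
      Matrix.mul_assoc]
  have hA0 : A.toQuadraticForm' ≠ 0 := fun h =>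
    hnc (commute_mul_transpose_of_transpose_mul_mul_eq h₁ h₂
      (sub_eq_zero.1 ((hA.toQuadraticForm'_eq_zero_iff).1 h)))
  have hzeros : {x | ¬(P₁ *ᵥ x) ⬝ᵥ S *ᵥ (P₁ *ᵥ x) ≠ (P₂ *ᵥ x) ⬝ᵥ S *ᵥ (P₂ *ᵥ x)}
      = {x | A.toQuadraticForm' x = 0} := by
    ext x
    simp only [A, Set.mem_ofPred_eq, toQuadraticForm'_apply, sub_mulVec, dotProduct_sub,
      ← dotProduct_mulVec_mulVec_self, sub_eq_zero, not_not]
  rw [ae_iff, hzeros]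
  exact A.toQuadraticForm'.measure_setOf_eq_zero volume A.continuous_toQuadraticForm'.measurable hA0

end Matrices

theorem Set.Finite.existsUnique_forall_le_of_injOn {α β : Type*} [LinearOrder β] {s : Set α}
    {f : α → β} (hs : s.Finite) (hne : s.Nonempty) (hf : s.InjOn f) :
    ∃! y, y ∈ s ∧ ∀ z ∈ s, f y ≤ f z := by
  obtain ⟨y, hy, hmin⟩ := s.exists_min_image f hs hne
  exact ⟨y, ⟨hy, hmin⟩, fun y' ⟨hy', hmin'⟩ => hf hy' hy ((hmin' y hy).antisymm (hmin y' hy'))⟩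

/-- If `Σ⁻¹` does not commute with `R₂R₁ᵀ` for any two distinct elements of a
group `G` of permutation matrices, then for almost every `x` the values
`‖Rx‖²_{Σ⁻¹}`, `R ∈ G`, are pairwise distinct; in particular the minimizer of
the quadratic form over the orbit of `x` is unique. -/
theorem ae_unique_minimizer_over_orbit (n : ℕ) (S : Matrix (Fin n) (Fin n) ℝ)
    (hS : S.PosDef) (G : Subgroup (Equiv.Perm (Fin n)))
    (hnc : ∀ σ₁ ∈ G, ∀ σ₂ ∈ G, σ₁ ≠ σ₂ →
      ¬ (S * (σ₂.permMatrix ℝ * (σ₁.permMatrix ℝ)ᵀ)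
          = (σ₂.permMatrix ℝ * (σ₁.permMatrix ℝ)ᵀ) * S)) :
    ∀ᵐ x ∂(volume : Measure (Fin n → ℝ)),
      (∀ σ₁ ∈ G, ∀ σ₂ ∈ G, σ₁ ≠ σ₂ →
        (σ₁.permMatrix ℝ *ᵥ x) ⬝ᵥ S *ᵥ (σ₁.permMatrix ℝ *ᵥ x)
          ≠ (σ₂.permMatrix ℝ *ᵥ x) ⬝ᵥ S *ᵥ (σ₂.permMatrix ℝ *ᵥ x))
      ∧ ∃! y : Fin n → ℝ,
          (∃ σ ∈ G, y = σ.permMatrix ℝ *ᵥ x)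
          ∧ ∀ z : Fin n → ℝ, (∃ σ ∈ G, z = σ.permMatrix ℝ *ᵥ x) →
              y ⬝ᵥ S *ᵥ y ≤ z ⬝ᵥ S *ᵥ z := by
  have hSymm : S.IsSymm := isHermitian_iff_isSymm.1 hS.isHermitian
  have hdistinct : ∀ᵐ x ∂(volume : Measure (Fin n → ℝ)), ∀ σ₁ ∈ G, ∀ σ₂ ∈ G, σ₁ ≠ σ₂ →
      (σ₁.permMatrix ℝ *ᵥ x) ⬝ᵥ S *ᵥ (σ₁.permMatrix ℝ *ᵥ x)
        ≠ (σ₂.permMatrix ℝ *ᵥ x) ⬝ᵥ S *ᵥ (σ₂.permMatrix ℝ *ᵥ x) := by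
    refine ae_all_iff.2 fun σ₁ => ae_all_iff.2 fun h₁ => ae_all_iff.2 fun σ₂ =>
      ae_all_iff.2 fun h₂ => ae_all_iff.2 fun hne => ?_
    exact ae_dotProduct_mulVec_ne_of_not_commute hSymm σ₁.permMatrix_mul_transpose
      σ₂.permMatrix_mul_transpose (hnc σ₁ h₁ σ₂ h₂ hne)
  filter_upwards [hdistinct] with x hx
  refine ⟨hx, Set.Finite.existsUnique_forall_le_of_injOn ?_ ⟨x, 1, G.one_mem, by simp⟩ ?_⟩
  · exact (Set.finite_range fun σ : Equiv.Perm (Fin n) => σ.permMatrix ℝ *ᵥ x).subset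
      fun y ⟨σ, _, hy⟩ => ⟨σ, hy.symm⟩
  · rintro _ ⟨σ₁, h₁, rfl⟩ _ ⟨σ₂, h₂, rfl⟩ heq
    obtain rfl | hne := eq_or_ne σ₁ σ₂
    · rfl
    · exact absurd heq (hx σ₁ h₁ σ₂ h₂ hne)
end

section
/- Consider the marginalized likelihood p(y|x) = (1/M) Σ_{ℓ=0}^{L-1} Σ_{k=0}^{K-1} exp(-‖y - R'_ℓ x_k‖²/(2σ²)) (up to a normalizing constant), where x_0,...,x_{K-1} are the sub-signals of x ∈ R^M with M = KL. Then p(y|x) = p(y|g·x) for every y ∈ R^L and every g in the group G_{Π,L} of sub-signal shifts and permutations. Consequently, if K ≥ 2 or L ≥ 2 and G_{Π,L} contains a nontrivial element g with g·x ≠ x, the signal x is not determined uniquely by the likelihood function. -/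
/-! Each element of the group sends the window of `x` at sub-signal `k` and shift `ℓ` to the
window at sub-signal `π k` and shift `ℓ - f (π k)`. This is a bijection of the index pairs
`(k, ℓ)`, so the likelihood, a sum over all pairs of a function of the window, is unchanged. -/

open Finset

theorem Finset.sum_sum_comp_perm_sub {ι G M : Type*} [Fintype ι] [AddGroup G] [Fintype G]
    [AddCommMonoid M] (F : ι → G → M) (π : Equiv.Perm ι) (f : ι → G) :
    ∑ ℓ, ∑ k, F (π k) (ℓ - f (π k)) = ∑ ℓ, ∑ k, F k ℓ := calc
  ∑ ℓ, ∑ k, F (π k) (ℓ - f (π k)) = ∑ k, ∑ ℓ, F (π k) (ℓ - f (π k)) := sum_comm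
  _ = ∑ k, ∑ ℓ, F (π k) ℓ :=
    sum_congr rfl fun k _ => Equiv.sum_comp (Equiv.subRight (f (π k))) (F (π k))
  _ = ∑ k, ∑ ℓ, F k ℓ := Equiv.sum_comp π fun k => ∑ ℓ, F k ℓ
  _ = ∑ ℓ, ∑ k, F k ℓ := sum_comm

noncomputable def marginalLikelihood {ι G : Type*} [Fintype ι] [AddGroup G] [Fintype G]
    (σ : ℝ) (x : ι × G → ℝ) (y : G → ℝ) : ℝ :=
  ∑ ℓ : G, ∑ k : ι, Real.exp (-(∑ j : G, (y j - x (k, j - ℓ)) ^ 2) / (2 * σ ^ 2))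

theorem marginalLikelihood_perm_shift {ι G : Type*} [Fintype ι] [AddCommGroup G] [Fintype G]
    (σ : ℝ) (x : ι × G → ℝ) (π : Equiv.Perm ι) (f : ι → G) (y : G → ℝ) :
    marginalLikelihood σ (fun p => x (π p.1, p.2 + f (π p.1))) y = marginalLikelihood σ x y := by
  have window_eq : ∀ k ℓ j, j - ℓ + f (π k) = j - (ℓ - f (π k)) := fun _ _ _ => by abel
  simp only [marginalLikelihood, window_eq]
  exact sum_sum_comp_perm_sub
    (fun k ℓ => Real.exp (-(∑ j : G, (y j - x (k, j - ℓ)) ^ 2) / (2 * σ ^ 2))) π f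

theorem likelihood_invariant_under_subsignal_group_general (K L : ℕ) [NeZero K] [NeZero L]
    (σ : ℝ) (x : ZMod K × ZMod L → ℝ)
    (g : Equiv.Perm (ZMod K × ZMod L))
    (hg : ∃ (π : Equiv.Perm (ZMod K)) (f : ZMod K → ZMod L),
      ∀ p : ZMod K × ZMod L, g p = (π p.1, p.2 + f (π p.1))) :
    (∀ y : ZMod L → ℝ,
      ∑ ℓ : ZMod L, ∑ k : ZMod K,
          Real.exp (-(∑ j : ZMod L, (y j - x (g (k, j - ℓ))) ^ 2) / (2 * σ ^ 2))
        = ∑ ℓ : ZMod L, ∑ k : ZMod K,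
            Real.exp (-(∑ j : ZMod L, (y j - x (k, j - ℓ)) ^ 2) / (2 * σ ^ 2)))
    ∧ ((fun p => x (g p)) ≠ x →
        ∃ x' : ZMod K × ZMod L → ℝ, x' ≠ x ∧ ∀ y : ZMod L → ℝ,
          ∑ ℓ : ZMod L, ∑ k : ZMod K,
              Real.exp (-(∑ j : ZMod L, (y j - x' (k, j - ℓ)) ^ 2) / (2 * σ ^ 2))
            = ∑ ℓ : ZMod L, ∑ k : ZMod K,
                Real.exp (-(∑ j : ZMod L, (y j - x (k, j - ℓ)) ^ 2) / (2 * σ ^ 2))) := by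
  obtain ⟨π, f, hgf⟩ := hg
  have hxg : (fun p => x (g p)) = fun p => x (π p.1, p.2 + f (π p.1)) := funext fun p => by
    rw [hgf]
  have invariant : ∀ y, marginalLikelihood σ (fun p => x (g p)) y = marginalLikelihood σ x y :=
    fun y => hxg ▸ marginalLikelihood_perm_shift σ x π f y
  exact ⟨invariant, fun hne => ⟨_, hne, invariant⟩⟩

/-- The marginalized likelihood is invariant under the group `G_{Π,L}` of
sub-signal shifts and permutations; consequently, if some element of this
group moves `x`, the signal `x` is not determined uniquely by the likelihood. -/
theorem likelihood_invariant_under_subsignal_group (K L : ℕ) [NeZero K] [NeZero L]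
    (σ : ℝ) (hσ : 0 < σ) (x : ZMod K × ZMod L → ℝ)
    (g : Equiv.Perm (ZMod K × ZMod L))
    (hg : ∃ (π : Equiv.Perm (ZMod K)) (f : ZMod K → ZMod L),
      ∀ p : ZMod K × ZMod L, g p = (π p.1, p.2 + f (π p.1))) :
    (∀ y : ZMod L → ℝ,
      ∑ ℓ : ZMod L, ∑ k : ZMod K,
          Real.exp (-(∑ j : ZMod L, (y j - x (g (k, j - ℓ))) ^ 2) / (2 * σ ^ 2))
        = ∑ ℓ : ZMod L, ∑ k : ZMod K,
            Real.exp (-(∑ j : ZMod L, (y j - x (k, j - ℓ)) ^ 2) / (2 * σ ^ 2)))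
    ∧ ((fun p => x (g p)) ≠ x →
        ∃ x' : ZMod K × ZMod L → ℝ, x' ≠ x ∧ ∀ y : ZMod L → ℝ,
          ∑ ℓ : ZMod L, ∑ k : ZMod K,
              Real.exp (-(∑ j : ZMod L, (y j - x' (k, j - ℓ)) ^ 2) / (2 * σ ^ 2))
            = ∑ ℓ : ZMod L, ∑ k : ZMod K,
                Real.exp (-(∑ j : ZMod L, (y j - x (k, j - ℓ)) ^ 2) / (2 * σ ^ 2))) :=
  likelihood_invariant_under_subsignal_group_general K L σ x g hg
end
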